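/- Let ε ∈ (0, 1/4], let G be a P5-free graph, let v ∈ V(G), let A ⊆ N_G(v) and B ⊆ V(G) \ N_G[v], and suppose B is (ε,χ)-dense to A (i.e., χ(A \ N_G(z)) < ε·χ(A) for all z ∈ B). Then at least one of the following holds: (i) there exist X ⊆ A with χ(X) ≥ ε·χ(A) and Y ⊆ B with χ(Y) ≥ ε·χ(B) such that (X,Y) is a pure pair (X is complete or anticomplete to Y); (ii) there exists C ⊆ A with χ(C) ≥ χ(A)/2 such that G[C] is (4ε,χ)-dense; (iii) there exists D ⊆ B with χ(D) ≥ χ(B)/2 such that G[D] is (4ε,χ)-dense. -/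

import Mathlib

open SimpleGraph

/-- The chromatic number of the subgraph of `G` induced on `S`, as a natural number. -/
noncomputable def chiS {V : Type*} [Fintype V] (G : SimpleGraph V) (S : Set V) : ℕ :=
  (G.induce S).chromaticNumber.toNat

/-- A graph is `P5`-free if it has no induced subgraph isomorphic to the five-vertex path. -/
def P5Free {V : Type*} (G : SimpleGraph V) : Prop :=
  IsEmpty (SimpleGraph.pathGraph 5 ↪g G)

/-- The induced subgraph `G[S]` is `(ε,χ)`-dense: removing any closed neighbourhood
drops the chromatic number below `ε · χ(S)`. -/
def EpsChiDense {V : Type*} [Fintype V] (G : SimpleGraph V) (ε : ℝ) (S : Set V) : Prop :=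
  ∀ u ∈ S, (chiS G (S \ insert u (G.neighborSet u)) : ℝ) < ε * (chiS G S : ℝ)

/-! Call `a ∈ A` sparse if `χ(A \ N[a]) ≥ 2εχ(A)`, and likewise in `B`. If the non-sparse
vertices carry half of `χ(A)` (or of `χ(B)`) they induce a `(4ε,χ)`-dense graph. Otherwise
there are sparse `a ∈ A`, `b ∈ B` with `ab` a nonedge, and `(A \ N[a]) ∩ N(b)` is complete to
`(B \ N[b]) ∩ N(a)`, since a nonedge `xz` would give the induced path `z-a-v-x-b`. The first set
is large because `B` is dense to `A`; the second because a sparse `a` misses little of `B`: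
for `w ∈ B \ N(a)`, the vertices of `B \ N(a)` complete to `(A \ N[a]) ∩ N(w)` form a union of
components of `G[B \ N(a)]` (an edge `w₁w₂` leaving it gives the induced path `a-v-x-w₁-w₂`),
so every such union has small `χ` unless the complete pure pair exists anyway. -/

section ChromaticNumber

variable {V : Type*} [Fintype V] (G : SimpleGraph V)

theorem chiS_colorable (S : Set V) : (G.induce S).Colorable (chiS G S) :=
  colorable_chromaticNumber_of_fintype _

theorem chiS_le_of_colorable {S : Set V} {n : ℕ} (h : (G.induce S).Colorable n) :
    chiS G S ≤ n := by
  simpa [chiS] using ENat.toNat_le_toNat h.chromaticNumber_le (by simp)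

theorem chiS_empty : chiS G (∅ : Set V) = 0 := by
  simp [chiS]

theorem chiS_mono {S T : Set V} (h : S ⊆ T) : chiS G S ≤ chiS G T := by
  obtain ⟨c⟩ := chiS_colorable G T
  exact chiS_le_of_colorable G
    ⟨Coloring.mk (fun x => c ⟨x.1, h x.2⟩) fun hab => c.valid (by simpa using hab)⟩

theorem chiS_union_le (S T : Set V) : chiS G (S ∪ T) ≤ chiS G S + chiS G T := by
  classical
  obtain ⟨cS⟩ := chiS_colorable G S
  obtain ⟨cT⟩ := chiS_colorable G T
  let c : (G.induce (S ∪ T)).Coloring (Fin (chiS G S) ⊕ Fin (chiS G T)) :=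
    Coloring.mk (fun x => if h : x.1 ∈ S then Sum.inl (cS ⟨x.1, h⟩)
      else Sum.inr (cT ⟨x.1, x.2.resolve_left h⟩)) fun {a b} hab heq => by
      have hGab : G.Adj a.1 b.1 := by simpa using hab
      by_cases ha : a.1 ∈ S <;> by_cases hb : b.1 ∈ S <;> simp [ha, hb] at heq
      · exact cS.valid (by simpa using hGab) heq
      · exact cT.valid (by simpa using hGab) heq
  simpa using chiS_le_of_colorable G (c.colorable.mono (by simp))

theorem chiS_union_le_max {S T : Set V} (hST : ∀ x ∈ S, ∀ y ∈ T, ¬ G.Adj x y) :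
    chiS G (S ∪ T) ≤ max (chiS G S) (chiS G T) := by
  classical
  obtain ⟨cS⟩ := chiS_colorable G S
  obtain ⟨cT⟩ := chiS_colorable G T
  refine chiS_le_of_colorable G ⟨Coloring.mk
    (fun x => if h : x.1 ∈ S then Fin.castLE (le_max_left _ _) (cS ⟨x.1, h⟩)
      else Fin.castLE (le_max_right _ _) (cT ⟨x.1, x.2.resolve_left h⟩)) fun {a b} hab heq => ?_⟩
  have hGab : G.Adj a.1 b.1 := by simpa using hab
  by_cases ha : a.1 ∈ S <;> by_cases hb : b.1 ∈ S <;> simp [ha, hb, Fin.castLE] at heq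
  · exact cS.valid (by simpa using hGab) (Fin.val_injective heq)
  · exact hST a.1 ha b.1 (b.2.resolve_left hb) hGab
  · exact hST b.1 hb a.1 (a.2.resolve_left ha) hGab.symm
  · exact cT.valid (by simpa using hGab) (Fin.val_injective heq)

theorem chiS_le_inter_add_diff {S T : Set V} (hST : S ⊆ T) (N : Set V) :
    chiS G S ≤ chiS G (S ∩ N) + chiS G (T \ N) :=
  calc chiS G S ≤ chiS G (S ∩ N) + chiS G (S \ N) := by
        simpa only [Set.inter_union_sdiff] using chiS_union_le G (S ∩ N) (S \ N)
    _ ≤ chiS G (S ∩ N) + chiS G (T \ N) :=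
        Nat.add_le_add_left (chiS_mono G (Set.sdiff_subset_sdiff_left hST)) _

theorem chiS_lt_of_forall_exists_closed {U : Set V} {t : ℝ} (ht : 0 < t)
    (h : ∀ W ⊆ U, ∀ w ∈ W, ∃ Y ⊆ W, w ∈ Y ∧ (chiS G Y : ℝ) < t ∧
      ∀ y ∈ Y, ∀ u ∈ W \ Y, ¬ G.Adj y u) :
    (chiS G U : ℝ) < t := by
  induction hn : U.ncard using Nat.strong_induction_on generalizing U with
  | _ n ih =>
  rcases U.eq_empty_or_nonempty with rfl | ⟨w, hw⟩
  · simpa [chiS_empty] using ht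
  obtain ⟨Y, hYU, hwY, hY, hclosed⟩ := h U subset_rfl w hw
  have hrest : (chiS G (U \ Y) : ℝ) < t := by
    refine ih _ (hn ▸ Set.ncard_lt_ncard ?_ U.toFinite)
      (fun W hW => h W (hW.trans Set.sdiff_subset)) rfl
    exact Set.sdiff_ssubset_left_iff.mpr ⟨w, hw, hwY⟩
  have hmax : chiS G U ≤ max (chiS G Y) (chiS G (U \ Y)) := by
    simpa only [Set.union_sdiff_cancel hYU] using chiS_union_le_max G hclosed
  calc (chiS G U : ℝ) ≤ max (chiS G Y : ℝ) (chiS G (U \ Y)) := by exact_mod_cast hmax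
    _ < t := max_lt hY hrest

theorem exists_epsChiDense_or_sparse (T : Set V) {δ : ℝ} (hδ : 0 ≤ δ) :
    (∃ S ⊆ T, (chiS G T : ℝ) / 2 ≤ chiS G S ∧ EpsChiDense G (2 * δ) S) ∨
    (∃ S ⊆ T, (chiS G T : ℝ) / 2 < chiS G S ∧
      ∀ u ∈ S, δ * chiS G T ≤ chiS G (T \ insert u (G.neighborSet u))) := by
  set D := {u ∈ T | (chiS G (T \ insert u (G.neighborSet u)) : ℝ) < δ * chiS G T}
  have hDT : D ⊆ T := Set.sep_subset _ _
  by_cases hD : (chiS G T : ℝ) / 2 ≤ chiS G D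
  · refine Or.inl ⟨D, hDT, hD, fun u hu => ?_⟩
    have hmono : (chiS G (D \ insert u (G.neighborSet u)) : ℝ)
        ≤ chiS G (T \ insert u (G.neighborSet u)) := by
      exact_mod_cast chiS_mono G (Set.sdiff_subset_sdiff_left hDT)
    nlinarith [hu.2]
  · refine Or.inr ⟨T \ D, Set.sdiff_subset, ?_, fun u hu => not_lt.mp fun h => hu.2 ⟨hu.1, h⟩⟩
    have hsplit : (chiS G T : ℝ) ≤ chiS G D + chiS G (T \ D) := by
      exact_mod_cast Set.inter_eq_self_of_subset_right hDT ▸ chiS_le_inter_add_diff G subset_rfl D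
    linarith

end ChromaticNumber

section P5Free

variable {V : Type*} {G : SimpleGraph V}

theorem P5Free.false_of_adj_iff (hP5 : P5Free G) (f : Fin 5 → V)
    (hf : ∀ i j, G.Adj (f i) (f j) ↔ (pathGraph 5).Adj i j) : False := by
  refine hP5.false ⟨⟨f, fun i j hij => ?_⟩, hf _ _⟩
  by_contra hne
  simp only [pathGraph_adj] at hf
  -- injectivity is automatic: no two vertices of `P5` have the same neighbourhood
  have twinless : ∀ i j : Fin 5, i ≠ j → ∃ k : Fin 5,
      ¬((i.val + 1 = k.val ∨ k.val + 1 = i.val) ↔ (j.val + 1 = k.val ∨ k.val + 1 = j.val)) := by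
    decide
  obtain ⟨k, hk⟩ := twinless i j hne
  exact hk ((hf i k).symm.trans (hij ▸ hf j k))

theorem P5Free.false_of_induced_path (hP5 : P5Free G) {x₁ x₂ x₃ x₄ x₅ : V}
    (h₁₂ : G.Adj x₁ x₂) (h₂₃ : G.Adj x₂ x₃) (h₃₄ : G.Adj x₃ x₄) (h₄₅ : G.Adj x₄ x₅)
    (h₁₃ : ¬ G.Adj x₁ x₃) (h₁₄ : ¬ G.Adj x₁ x₄) (h₁₅ : ¬ G.Adj x₁ x₅)
    (h₂₄ : ¬ G.Adj x₂ x₄) (h₂₅ : ¬ G.Adj x₂ x₅) (h₃₅ : ¬ G.Adj x₃ x₅) : False := by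
  refine hP5.false_of_adj_iff ![x₁, x₂, x₃, x₄, x₅] fun i j => ?_
  fin_cases i <;> fin_cases j <;> simp [pathGraph_adj, G.adj_comm x₂ x₁, G.adj_comm x₃ x₂,
    G.adj_comm x₄ x₃, G.adj_comm x₅ x₄, G.adj_comm x₃ x₁, G.adj_comm x₄ x₁, G.adj_comm x₅ x₁,
    G.adj_comm x₄ x₂, G.adj_comm x₅ x₂, G.adj_comm x₅ x₃, *]

variable {v : V} {A B : Set V}

theorem P5Free.adj_of_adj_of_adj (hP5 : P5Free G) (hA : A ⊆ G.neighborSet v)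
    (hB : B ⊆ (G.neighborSet v)ᶜ) {a x w w' : V} (ha : a ∈ A) (hx : x ∈ A) (hw : w ∈ B)
    (hw' : w' ∈ B) (hax : ¬ G.Adj a x) (haw : ¬ G.Adj a w) (haw' : ¬ G.Adj a w')
    (hxw : G.Adj x w) (hww' : G.Adj w w') : G.Adj x w' :=
  by_contra fun hxw' =>
    hP5.false_of_induced_path (hA ha).symm (hA hx) hxw hww' hax haw haw' (hB hw) (hB hw') hxw'

theorem P5Free.adj_of_cross_adj (hP5 : P5Free G) (hA : A ⊆ G.neighborSet v)
    (hB : B ⊆ (G.neighborSet v)ᶜ) {a b x z : V} (ha : a ∈ A) (hb : b ∈ B) (hx : x ∈ A)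
    (hz : z ∈ B) (hab : ¬ G.Adj a b) (hax : ¬ G.Adj a x) (hbz : ¬ G.Adj b z)
    (hxb : G.Adj x b) (haz : G.Adj a z) : G.Adj x z :=
  by_contra fun hxz =>
    hP5.false_of_induced_path haz.symm (hA ha).symm (hA hx) hxb
      (fun h => hB hz (G.adj_symm h)) (fun h => hxz h.symm) (fun h => hbz h.symm) hax hab (hB hb)

end P5Free

section DenseToPair

variable {V : Type*} [Fintype V] {G : SimpleGraph V} {ε : ℝ} {A B : Set V}

theorem le_chiS_diff_inter_neighborSet
    (hdense : ∀ z ∈ B, (chiS G (A \ G.neighborSet z) : ℝ) < ε * chiS G A) {a b : V} (hb : b ∈ B)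
    (ha : 2 * ε * chiS G A ≤ chiS G (A \ insert a (G.neighborSet a))) :
    ε * chiS G A ≤ chiS G ((A \ insert a (G.neighborSet a)) ∩ G.neighborSet b) := by
  have hsplit : (chiS G (A \ insert a (G.neighborSet a)) : ℝ)
      ≤ chiS G ((A \ insert a (G.neighborSet a)) ∩ G.neighborSet b)
        + chiS G (A \ G.neighborSet b) := by
    exact_mod_cast chiS_le_inter_add_diff G Set.sdiff_subset _
  linarith [hdense b hb]

variable {v : V} (hP5 : P5Free G) (hA : A ⊆ G.neighborSet v) (hB : B ⊆ (G.neighborSet v)ᶜ)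
  (hdense : ∀ z ∈ B, (chiS G (A \ G.neighborSet z) : ℝ) < ε * chiS G A)
include hP5 hA hB hdense

theorem chiS_diff_neighborSet_lt (hpos : 0 < ε * chiS G B)
    (hpure : ∀ X ⊆ A, ∀ Y ⊆ B, ε * chiS G A ≤ chiS G X →
      (∀ x ∈ X, ∀ z ∈ Y, G.Adj x z) → (chiS G Y : ℝ) < ε * chiS G B)
    {a : V} (ha : a ∈ A) (hsparse : 2 * ε * chiS G A ≤ chiS G (A \ insert a (G.neighborSet a))) :
    (chiS G (B \ G.neighborSet a) : ℝ) < ε * chiS G B := by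
  refine chiS_lt_of_forall_exists_closed G hpos fun W hW w hw => ?_
  set X := (A \ insert a (G.neighborSet a)) ∩ G.neighborSet w
  have hXA : X ⊆ A := fun x hx => hx.1.1
  have hX := le_chiS_diff_inter_neighborSet hdense (hW hw).1 hsparse
  refine ⟨{u ∈ W | ∀ x ∈ X, G.Adj x u}, Set.sep_subset _ _, ⟨hw, fun x hx => hx.2.symm⟩,
    hpure X hXA _ (fun u hu => (hW hu.1).1) hX fun x hx u hu => hu.2 x hx, ?_⟩
  rintro y ⟨hyW, hy⟩ u ⟨huW, hu⟩ hyu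
  refine hu ⟨huW, fun x hx => ?_⟩
  exact hP5.adj_of_adj_of_adj hA hB ha (hXA hx) (hW hyW).1 (hW huW).1
    (fun h => hx.1.2 (Or.inr h)) (hW hyW).2 (hW huW).2 (hy x hx) hyu

theorem exists_complete_pair_of_sparse (hε : ε ≤ 1 / 2) (hpos : 0 < ε * chiS G B)
    {A' B' : Set V} (hA'A : A' ⊆ A) (hB'B : B' ⊆ B)
    (hA'χ : (chiS G A : ℝ) / 2 < chiS G A') (hB'χ : (chiS G B : ℝ) / 2 < chiS G B')
    (hA' : ∀ a ∈ A', 2 * ε * chiS G A ≤ chiS G (A \ insert a (G.neighborSet a)))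
    (hB' : ∀ b ∈ B', 2 * ε * chiS G B ≤ chiS G (B \ insert b (G.neighborSet b))) :
    ∃ X ⊆ A, ∃ Y ⊆ B, ε * chiS G A ≤ chiS G X ∧ ε * chiS G B ≤ chiS G Y ∧
      ∀ x ∈ X, ∀ z ∈ Y, G.Adj x z := by
  by_contra hnone
  have hpure : ∀ X ⊆ A, ∀ Y ⊆ B, ε * chiS G A ≤ chiS G X →
      (∀ x ∈ X, ∀ z ∈ Y, G.Adj x z) → (chiS G Y : ℝ) < ε * chiS G B :=
    fun X hX Y hY hXχ hXY => not_le.mp fun hYχ => hnone ⟨X, hX, Y, hY, hXχ, hYχ, hXY⟩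
  have hA0 : (0 : ℝ) ≤ chiS G A := Nat.cast_nonneg _
  have hB0 : (0 : ℝ) ≤ chiS G B := Nat.cast_nonneg _
  obtain ⟨a, haA', b, hbB', hab⟩ : ∃ a ∈ A', ∃ b ∈ B', ¬ G.Adj a b := by
    by_contra! hcomplete
    have := hpure A' hA'A B' hB'B (by nlinarith) hcomplete
    nlinarith
  have ha := hA'A haA'
  have hb := hB'B hbB'
  set X := (A \ insert a (G.neighborSet a)) ∩ G.neighborSet b
  set Y := (B \ insert b (G.neighborSet b)) ∩ G.neighborSet a
  have hXY : ∀ x ∈ X, ∀ z ∈ Y, G.Adj x z := fun x hx z hz =>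
    hP5.adj_of_cross_adj hA hB ha hb hx.1.1 hz.1.1 hab (fun h => hx.1.2 (Or.inr h))
      (fun h => hz.1.2 (Or.inr h)) hx.2.symm hz.2
  have hYχ : ε * chiS G B ≤ chiS G Y := by
    have hsplit : (chiS G (B \ insert b (G.neighborSet b)) : ℝ)
        ≤ chiS G Y + chiS G (B \ G.neighborSet a) := by
      exact_mod_cast chiS_le_inter_add_diff G Set.sdiff_subset _
    linarith [hB' b hbB', chiS_diff_neighborSet_lt hP5 hA hB hdense hpos hpure ha (hA' a haA')]
  exact hnone ⟨X, fun x hx => hx.1.1, Y, fun z hz => hz.1.1,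
    le_chiS_diff_inter_neighborSet hdense hb (hA' a haA'), hYχ, hXY⟩

end DenseToPair

theorem stmt_11 {V : Type*} [Fintype V] (G : SimpleGraph V) (hP5 : P5Free G)
    (ε : ℝ) (hε0 : 0 < ε) (hε : ε ≤ 1 / 4)
    (v : V) (A B : Set V)
    (hA : A ⊆ G.neighborSet v) (hB : B ⊆ (insert v (G.neighborSet v))ᶜ)
    (hdense : ∀ z ∈ B, (chiS G (A \ G.neighborSet z) : ℝ) < ε * (chiS G A : ℝ)) :
    (∃ X ⊆ A, ∃ Y ⊆ B,
      ε * (chiS G A : ℝ) ≤ (chiS G X : ℝ) ∧ ε * (chiS G B : ℝ) ≤ (chiS G Y : ℝ) ∧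
      ((∀ x ∈ X, ∀ z ∈ Y, G.Adj x z) ∨ (∀ x ∈ X, ∀ z ∈ Y, ¬ G.Adj x z))) ∨
    (∃ C ⊆ A, (chiS G A : ℝ) / 2 ≤ (chiS G C : ℝ) ∧ EpsChiDense G (4 * ε) C) ∨
    (∃ D ⊆ B, (chiS G B : ℝ) / 2 ≤ (chiS G D : ℝ) ∧ EpsChiDense G (4 * ε) D) := by
  rcases (chiS G B).eq_zero_or_pos with hB0 | hBpos
  · refine Or.inl ⟨A, subset_rfl, ∅, Set.empty_subset _, ?_, by simp [hB0, chiS_empty],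
      Or.inl (by simp)⟩
    nlinarith [(Nat.cast_nonneg (chiS G A) : (0 : ℝ) ≤ _)]
  have h4ε : 2 * (2 * ε) = 4 * ε := by ring
  rcases exists_epsChiDense_or_sparse G A (δ := 2 * ε) (by positivity) with
    ⟨C, hCA, hCχ, hC⟩ | ⟨A', hA'A, hA'χ, hA'⟩
  · exact Or.inr (Or.inl ⟨C, hCA, hCχ, h4ε ▸ hC⟩)
  rcases exists_epsChiDense_or_sparse G B (δ := 2 * ε) (by positivity) with
    ⟨D, hDB, hDχ, hD⟩ | ⟨B', hB'B, hB'χ, hB'⟩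
  · exact Or.inr (Or.inr ⟨D, hDB, hDχ, h4ε ▸ hD⟩)
  obtain ⟨X, hXA, Y, hYB, hXχ, hYχ, hXY⟩ :=
    exists_complete_pair_of_sparse hP5 hA (fun b hb h => hB hb (Or.inr h)) hdense
      (by linarith) (by positivity) hA'A hB'B hA'χ hB'χ hA' hB'
  exact Or.inl ⟨X, hXA, Y, hYB, hXχ, hYχ, Or.inl hXY⟩
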